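/- (Proposition 1.) Under symmetric label noise with error rate e satisfying 0 ≤ e < (K−1)/K and positive class masses, for any two measurable LLM labelers ŷ₀, ŷ₁ : Ω → Fin K evaluated against the same ground truth y and the same reference r, the measurement-error difference satisfies ε(ŷ₁) − ε(ŷ₀) = −(A_T(ŷ₁) − A_T(ŷ₀)) = −(1/a)·( (A_R(ŷ₁) − A_R(ŷ₀)) − (J(ŷ₁) − J(ŷ₀)) ), where a = (1−e) − e/(K−1) > 0. -/

import Mathlib

/-! Splitting each event by the true class `y = k`, subtracting `J` removes from `A_R` exactly the
within-class covariance of `ŷ` and `r`, so `A_R − J = ∑ₖ ∑ₗ μ(ŷ = l, y = k) · μ(r = l | y = k)`.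
Under symmetric noise `μ(r = l | y = k) = e/(K−1) + a·[l = k]`, hence `A_R − J = a · A_T + e/(K−1)`
is affine in `A_T` with slope `a > 0`, and the intercept cancels in differences. -/

open MeasureTheory

/-- True agreement `A_T(ŷ) = μ({ŷ = y})`. -/
noncomputable def trueAgree {Ω : Type*} [MeasurableSpace Ω] {K : ℕ}
    (μ : Measure Ω) (y yhat : Ω → Fin K) : ℝ :=
  (μ {ω | yhat ω = y ω}).toReal

/-- Reference agreement `A_R(ŷ) = μ({ŷ = r})`. -/
noncomputable def refAgree {Ω : Type*} [MeasurableSpace Ω] {K : ℕ}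
    (μ : Measure Ω) (r yhat : Ω → Fin K) : ℝ :=
  (μ {ω | yhat ω = r ω}).toReal

/-- Measurement error `ε(ŷ) = 1 − A_T(ŷ)`. -/
noncomputable def measError {Ω : Type*} [MeasurableSpace Ω] {K : ℕ}
    (μ : Measure Ω) (y yhat : Ω → Fin K) : ℝ :=
  1 - trueAgree μ y yhat

/-- Co-labeling covariance
`J(ŷ) = ∑ₖ ∑ₗ [ μ({ŷ=ℓ}∩{r=ℓ}∩{y=k}) − μ({ŷ=ℓ}∩{y=k})·μ({r=ℓ}∩{y=k}) / μ({y=k}) ]`. -/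
noncomputable def coLabelCov {Ω : Type*} [MeasurableSpace Ω] {K : ℕ}
    (μ : Measure Ω) (y r yhat : Ω → Fin K) : ℝ :=
  ∑ k : Fin K, ∑ l : Fin K,
    ((μ ({ω | yhat ω = l} ∩ {ω | r ω = l} ∩ {ω | y ω = k})).toReal
      - (μ ({ω | yhat ω = l} ∩ {ω | y ω = k})).toReal
          * (μ ({ω | r ω = l} ∩ {ω | y ω = k})).toReal
          / (μ {ω | y ω = k}).toReal)


theorem measureReal_eq_sum_inter_fiber {Ω ι : Type*} [MeasurableSpace Ω] [MeasurableSpace ι]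
    [MeasurableSingletonClass ι] [Fintype ι] {μ : Measure Ω} [IsFiniteMeasure μ] {f : Ω → ι}
    (hf : Measurable f) (S : Set Ω) :
    μ.real S = ∑ i, μ.real ({ω | f ω = i} ∩ S) := by
  have h := sum_measureReal_preimage_singleton (μ := μ.restrict S) Finset.univ
    fun i _ ↦ hf (measurableSet_singleton i)
  simp only [Finset.coe_univ, Set.preimage_univ, measureReal_restrict_apply_univ] at h
  rw [← h]
  refine Finset.sum_congr rfl fun i _ ↦ ?_
  exact measureReal_restrict_apply (hf (measurableSet_singleton i))

section Agreement

variable {Ω : Type*} [MeasurableSpace Ω] {K : ℕ} {μ : Measure Ω} [IsFiniteMeasure μ]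
  {y r yhat : Ω → Fin K}

theorem trueAgree_eq_sum (hy : Measurable y) :
    trueAgree μ y yhat = ∑ k, μ.real ({ω | yhat ω = k} ∩ {ω | y ω = k}) := by
  rw [trueAgree, ← measureReal_def, measureReal_eq_sum_inter_fiber hy]
  refine Finset.sum_congr rfl fun k _ ↦ congrArg μ.real (Set.ext fun ω ↦ ?_)
  simp only [Set.mem_inter_iff, Set.mem_ofPred_eq]
  constructor
  · rintro ⟨hk, hyy⟩
    exact ⟨hyy.trans hk, hk⟩
  · rintro ⟨hyk, hk⟩
    exact ⟨hk, hyk.trans hk.symm⟩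

theorem refAgree_eq_sum (hy : Measurable y) (hr : Measurable r) :
    refAgree μ r yhat
      = ∑ k, ∑ l, μ.real ({ω | yhat ω = l} ∩ {ω | r ω = l} ∩ {ω | y ω = k}) := by
  rw [refAgree, ← measureReal_def, measureReal_eq_sum_inter_fiber hy]
  refine Finset.sum_congr rfl fun k _ ↦ ?_
  rw [measureReal_eq_sum_inter_fiber hr]
  refine Finset.sum_congr rfl fun l _ ↦ congrArg μ.real (Set.ext fun ω ↦ ?_)
  simp only [Set.mem_inter_iff, Set.mem_ofPred_eq]
  constructor
  · rintro ⟨hl, hk, hyr⟩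
    exact ⟨⟨hyr.trans hl, hl⟩, hk⟩
  · rintro ⟨⟨hyl, hl⟩, hk⟩
    exact ⟨hl, hk, hyl.trans hl.symm⟩

theorem refAgree_sub_coLabelCov_eq_sum (hy : Measurable y) (hr : Measurable r) :
    refAgree μ r yhat - coLabelCov μ y r yhat
      = ∑ k, ∑ l, μ.real ({ω | yhat ω = l} ∩ {ω | y ω = k})
          * μ.real ({ω | r ω = l} ∩ {ω | y ω = k}) / μ.real {ω | y ω = k} := by
  simp only [refAgree_eq_sum hy hr, coLabelCov, ← measureReal_def, ← Finset.sum_sub_distrib,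
    sub_sub_cancel]

theorem refAgree_sub_coLabelCov_of_symmetric_noise [IsProbabilityMeasure μ] {e : ℝ}
    (hy : Measurable y) (hr : Measurable r) (hyhat : Measurable yhat)
    (hnoise_diag : ∀ k : Fin K,
      μ.real ({ω | r ω = k} ∩ {ω | y ω = k}) = (1 - e) * μ.real {ω | y ω = k})
    (hnoise_off : ∀ k l : Fin K, l ≠ k →
      μ.real ({ω | r ω = l} ∩ {ω | y ω = k}) = e / ((K : ℝ) - 1) * μ.real {ω | y ω = k}) :
    refAgree μ r yhat - coLabelCov μ y r yhat
      = ((1 - e) - e / ((K : ℝ) - 1)) * trueAgree μ y yhat + e / ((K : ℝ) - 1) := by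
  set c := e / ((K : ℝ) - 1)
  have hclass : ∀ k,
      ∑ l, μ.real ({ω | yhat ω = l} ∩ {ω | y ω = k})
          * μ.real ({ω | r ω = l} ∩ {ω | y ω = k}) / μ.real {ω | y ω = k}
        = c * μ.real {ω | y ω = k}
          + ((1 - e) - c) * μ.real ({ω | yhat ω = k} ∩ {ω | y ω = k}) := by
    intro k
    have hterm : ∀ l,
        μ.real ({ω | yhat ω = l} ∩ {ω | y ω = k})
            * μ.real ({ω | r ω = l} ∩ {ω | y ω = k}) / μ.real {ω | y ω = k}
          = c * μ.real ({ω | yhat ω = l} ∩ {ω | y ω = k})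
            + if l = k then ((1 - e) - c) * μ.real ({ω | yhat ω = l} ∩ {ω | y ω = k})
              else 0 := by
      intro l
      obtain hm | hm := eq_or_ne (μ.real {ω | y ω = k}) 0
      · -- a null class: both sides vanish, the left one through division by zero
        have hp : μ.real ({ω | yhat ω = l} ∩ {ω | y ω = k}) = 0 :=
          le_antisymm (hm ▸ measureReal_mono Set.inter_subset_right) measureReal_nonneg
        simp [hp]
      by_cases hlk : l = k
      · subst hlk
        rw [hnoise_diag, if_pos rfl]
        field_simp
        ring
      · rw [hnoise_off k l hlk, if_neg hlk]
        field_simp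
        ring
    rw [Finset.sum_congr rfl fun l _ ↦ hterm l, Finset.sum_add_distrib, ← Finset.mul_sum,
      Finset.sum_ite_eq', if_pos (Finset.mem_univ k), ← measureReal_eq_sum_inter_fiber hyhat]
  have hmass : ∑ k, μ.real {ω | y ω = k} = 1 := by
    simpa using (measureReal_eq_sum_inter_fiber (μ := μ) hy Set.univ).symm
  rw [refAgree_sub_coLabelCov_eq_sum hy hr, Finset.sum_congr rfl fun k _ ↦ hclass k,
    Finset.sum_add_distrib, ← Finset.mul_sum, ← Finset.mul_sum, hmass, trueAgree_eq_sum hy]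
  ring

end Agreement

theorem identSlope_pos {K : ℕ} {e : ℝ} (hK : 2 ≤ K) (he : e < ((K : ℝ) - 1) / K) :
    0 < (1 - e) - e / ((K : ℝ) - 1) := by
  have hK' : (2 : ℝ) ≤ K := by exact_mod_cast hK
  have heK : e * K < K - 1 := (lt_div_iff₀ (by linarith)).mp he
  rw [sub_pos, div_lt_iff₀ (by linarith)]
  linarith

theorem measurement_error_difference_general
    {Ω : Type*} [MeasurableSpace Ω] {K : ℕ} (hK : 2 ≤ K)
    (e : ℝ) (he1 : e < ((K : ℝ) - 1) / K)
    (μ : Measure Ω) [IsProbabilityMeasure μ]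
    (y r : Ω → Fin K) (hy : Measurable y) (hr : Measurable r)
    (hnoise_diag : ∀ k : Fin K,
      (μ ({ω | r ω = k} ∩ {ω | y ω = k})).toReal
        = (1 - e) * (μ {ω | y ω = k}).toReal)
    (hnoise_off : ∀ k l : Fin K, l ≠ k →
      (μ ({ω | r ω = l} ∩ {ω | y ω = k})).toReal
        = e / ((K : ℝ) - 1) * (μ {ω | y ω = k}).toReal)
    (yhat₀ yhat₁ : Ω → Fin K) (hyhat₀ : Measurable yhat₀) (hyhat₁ : Measurable yhat₁) :
    0 < (1 - e) - e / ((K : ℝ) - 1) ∧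
    measError μ y yhat₁ - measError μ y yhat₀
      = -(trueAgree μ y yhat₁ - trueAgree μ y yhat₀) ∧
    measError μ y yhat₁ - measError μ y yhat₀
      = -(1 / ((1 - e) - e / ((K : ℝ) - 1)))
          * ((refAgree μ r yhat₁ - refAgree μ r yhat₀)
              - (coLabelCov μ y r yhat₁ - coLabelCov μ y r yhat₀)) := by
  have ha := identSlope_pos hK he1
  have hkey₀ := refAgree_sub_coLabelCov_of_symmetric_noise hy hr hyhat₀ hnoise_diag hnoise_off
  have hkey₁ := refAgree_sub_coLabelCov_of_symmetric_noise hy hr hyhat₁ hnoise_diag hnoise_off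
  have hdiff : (refAgree μ r yhat₁ - refAgree μ r yhat₀)
      - (coLabelCov μ y r yhat₁ - coLabelCov μ y r yhat₀)
      = ((1 - e) - e / ((K : ℝ) - 1)) * (trueAgree μ y yhat₁ - trueAgree μ y yhat₀) := by
    linear_combination hkey₁ - hkey₀
  refine ⟨ha, by unfold measError; ring, ?_⟩
  rw [hdiff, measError, measError]
  field_simp
  ring

/-- **Proposition 1.** Under symmetric label noise with
`0 ≤ e < (K−1)/K` and positive class masses, for labelers `ŷ₀, ŷ₁` against the
same `y` and `r`, with `a = (1−e) − e/(K−1) > 0`: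
`ε(ŷ₁) − ε(ŷ₀) = −(A_T(ŷ₁) − A_T(ŷ₀))
  = −(1/a)·((A_R(ŷ₁) − A_R(ŷ₀)) − (J(ŷ₁) − J(ŷ₀)))`. -/
theorem measurement_error_difference
    {Ω : Type*} [MeasurableSpace Ω] {K : ℕ} (hK : 2 ≤ K)
    (e : ℝ) (he0 : 0 ≤ e) (he1 : e < ((K : ℝ) - 1) / K)
    (μ : Measure Ω) [IsProbabilityMeasure μ]
    (y r : Ω → Fin K) (hy : Measurable y) (hr : Measurable r)
    (hnoise_diag : ∀ k : Fin K,
      (μ ({ω | r ω = k} ∩ {ω | y ω = k})).toReal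
        = (1 - e) * (μ {ω | y ω = k}).toReal)
    (hnoise_off : ∀ k l : Fin K, l ≠ k →
      (μ ({ω | r ω = l} ∩ {ω | y ω = k})).toReal
        = e / ((K : ℝ) - 1) * (μ {ω | y ω = k}).toReal)
    (hpos : ∀ k : Fin K, 0 < μ {ω | y ω = k})
    (yhat₀ yhat₁ : Ω → Fin K) (hyhat₀ : Measurable yhat₀) (hyhat₁ : Measurable yhat₁) :
    0 < (1 - e) - e / ((K : ℝ) - 1) ∧
    measError μ y yhat₁ - measError μ y yhat₀
      = -(trueAgree μ y yhat₁ - trueAgree μ y yhat₀) ∧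
    measError μ y yhat₁ - measError μ y yhat₀
      = -(1 / ((1 - e) - e / ((K : ℝ) - 1)))
          * ((refAgree μ r yhat₁ - refAgree μ r yhat₀)
              - (coLabelCov μ y r yhat₁ - coLabelCov μ y r yhat₀)) :=
  measurement_error_difference_general hK e he1 μ y r hy hr hnoise_diag hnoise_off yhat₀ yhat₁
    hyhat₀ hyhat₁
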